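/- For every positive integer n, the number of integer pairs (x,y) with x² + 2y² = n equals 2·∑_{d|n} (−2/d), where (−2/d) denotes the Kronecker symbol. -/

import Mathlib

/-!
`ℤ[√-2]` is norm-Euclidean with units `±1`, and `r(n)` counts its elements of norm `n`.
For coprime `m, k`, an element `z` of norm `m * k` factors as `z = g * (z / g)` with
`g = gcd z m` of norm `m`, uniquely up to moving a unit between the factors, so
`2 * r(m * k) = r(m) * r(k)`. At prime powers: `2 = -(√-2)²` gives `r(2^a) = 2`; a prime `p`
modulo which `-2` is not a square divides both coordinates of anything whose norm it divides,
so `r(p^a)` is `2` or `0` according to the parity of `a`; otherwise `p = π * star π` with `π`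
and `star π` coprime primes, the elements of norm `p^a` are `±π^i * star π^(a-i)`, and
`r(p^a) = 2 * (a + 1)`. In each case this is `2 * ∑_{i ≤ a} (-2/p)^i`.
-/

/-- The Kronecker symbol `(-2/d)` for natural numbers `d`. -/
def chiNeg2 (d : ℕ) : ℤ :=
  if d % 8 = 1 ∨ d % 8 = 3 then 1
  else if d % 8 = 5 ∨ d % 8 = 7 then -1
  else 0

theorem Int.exists_two_mul_abs_sub_mul_le (c : ℤ) {n : ℤ} (hn : 0 < n) :
    ∃ a, 2 * |c - n * a| ≤ n := by
  have hdiv := Int.mul_ediv_add_emod (2 * c + n) (2 * n)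
  have hlo := Int.emod_nonneg (2 * c + n) (by omega : 2 * n ≠ 0)
  have hhi := Int.emod_lt_of_pos (2 * c + n) (by omega : 0 < 2 * n)
  refine ⟨(2 * c + n) / (2 * n), ?_⟩
  rw [← abs_two, ← abs_mul, abs_two, abs_le]
  constructor <;> linarith

theorem Nat.Coprime.sum_divisors_mul_of_map_mul {R : Type*} [CommSemiring R] {f : ℕ → R}
    (hf : ∀ a b, a.Coprime b → f (a * b) = f a * f b) {m n : ℕ} (hmn : m.Coprime n) :
    ∑ d ∈ (m * n).divisors, f d = (∑ d ∈ m.divisors, f d) * ∑ d ∈ n.divisors, f d := by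
  rw [hmn.divisors_mul, Finset.sum_map, Finset.sum_mul_sum, ← Finset.sum_product',
    ← Finset.sum_attach (m.divisors ×ˢ n.divisors)]
  refine Finset.sum_congr rfl fun ⟨⟨d, e⟩, hde⟩ _ => hf d e ?_
  rw [Finset.mem_coe, Finset.mem_product, Nat.mem_divisors, Nat.mem_divisors] at hde
  exact (hmn.coprime_dvd_left hde.1.1).coprime_dvd_right hde.2.1

section KroneckerSymbol

open ZMod

theorem chiNeg2_eq_χ₈' (d : ℕ) : chiNeg2 d = χ₈' d := by
  rw [χ₈'_nat_eq_if_mod_eight, chiNeg2]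
  have : d % 2 = d % 8 % 2 := (Nat.mod_mod_of_dvd d (by norm_num)).symm
  have := Nat.mod_lt d (show 8 > 0 by norm_num)
  interval_cases h : d % 8 <;> simp_all

theorem sum_divisors_mul_chiNeg2 {m n : ℕ} (hmn : m.Coprime n) :
    ∑ d ∈ (m * n).divisors, chiNeg2 d =
      (∑ d ∈ m.divisors, chiNeg2 d) * ∑ d ∈ n.divisors, chiNeg2 d :=
  hmn.sum_divisors_mul_of_map_mul fun a b _ => by
    simp only [chiNeg2_eq_χ₈', Nat.cast_mul, map_mul]

theorem sum_divisors_prime_pow_chiNeg2 {p : ℕ} (hp : p.Prime) (a : ℕ) :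
    ∑ d ∈ (p ^ a).divisors, chiNeg2 d = ∑ i ∈ Finset.range (a + 1), χ₈' p ^ i := by
  simp only [Nat.sum_divisors_prime_pow hp, chiNeg2_eq_χ₈', Nat.cast_pow, map_pow]

end KroneckerSymbol

namespace Zsqrtd

variable {d : ℤ}

theorem norm_dvd_norm {a b : ℤ√d} (h : a ∣ b) : a.norm ∣ b.norm :=
  map_dvd normMonoidHom h

theorem star_dvd_star {a b : ℤ√d} (h : a ∣ b) : star a ∣ star b :=
  map_dvd (starRingEnd _) h

theorem norm_pow (z : ℤ√d) (n : ℕ) : (z ^ n).norm = z.norm ^ n :=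
  map_pow normMonoidHom z n

end Zsqrtd

namespace ZsqrtdNegTwo

open Zsqrtd

theorem norm_eq (z : ℤ√(-2)) : z.norm = z.re ^ 2 + 2 * z.im ^ 2 := by
  rw [norm_def]; ring

theorem norm_nonneg (z : ℤ√(-2)) : 0 ≤ z.norm := Zsqrtd.norm_nonneg (by norm_num) z

theorem norm_pos {z : ℤ√(-2)} : 0 < z.norm ↔ z ≠ 0 :=
  (norm_nonneg z).lt_iff_ne'.trans (norm_eq_zero_iff (by norm_num) z).not

/-- Round the coordinates of `x * star y / y.norm` to get `q`: each rounding error is at most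
`1/2`, so `y.norm * (x - y * q).norm ≤ (1/4 + 2 * 1/4) * y.norm ^ 2`. -/
theorem exists_norm_sub_mul_lt (x : ℤ√(-2)) {y : ℤ√(-2)} (hy : y ≠ 0) :
    ∃ q, (x - y * q).norm < y.norm := by
  have hn : 0 < y.norm := norm_pos.mpr hy
  set w := x * star y
  obtain ⟨a, ha⟩ := Int.exists_two_mul_abs_sub_mul_le w.re hn
  obtain ⟨b, hb⟩ := Int.exists_two_mul_abs_sub_mul_le w.im hn
  refine ⟨⟨a, b⟩, ?_⟩
  have hconj : star y * (x - y * ⟨a, b⟩) = w - y.norm * ⟨a, b⟩ := by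
    rw [norm_eq_mul_conj]; ring
  have hkey : y.norm * (x - y * ⟨a, b⟩).norm =
      (w.re - y.norm * a) ^ 2 + 2 * (w.im - y.norm * b) ^ 2 := by
    rw [← Zsqrtd.norm_conj y, ← Zsqrtd.norm_mul, hconj, norm_eq]
    simp
  have hsq (t : ℤ) (ht : 2 * |t| ≤ y.norm) : 4 * t ^ 2 ≤ y.norm ^ 2 := by
    nlinarith [abs_nonneg t, sq_abs t]
  nlinarith [hsq _ ha, hsq _ hb, norm_nonneg (x - y * ⟨a, b⟩)]

noncomputable def euclideanQuot (x y : ℤ√(-2)) : ℤ√(-2) :=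
  if hy : y = 0 then 0 else (exists_norm_sub_mul_lt x hy).choose

noncomputable instance : EuclideanDomain (ℤ√(-2)) where
  quotient := euclideanQuot
  remainder x y := x - y * euclideanQuot x y
  quotient_zero x := dif_pos rfl
  quotient_mul_add_remainder_eq x y := by ring
  r a b := a.norm.natAbs < b.norm.natAbs
  r_wellFounded := (measure (Int.natAbs ∘ Zsqrtd.norm)).wf
  remainder_lt x y hy := by
    have := (exists_norm_sub_mul_lt x hy).choose_spec
    simp only [euclideanQuot, dif_neg hy]
    have := norm_nonneg (x - y * (exists_norm_sub_mul_lt x hy).choose)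
    omega
  mul_left_not_lt a b hb := by
    have := norm_pos.mpr hb
    rw [Zsqrtd.norm_mul, Int.natAbs_mul, not_lt]
    exact Nat.le_mul_of_pos_right _ (by omega)

theorem isUnit_iff {z : ℤ√(-2)} : IsUnit z ↔ z = 1 ∨ z = -1 := by
  rw [← norm_eq_one_iff' (by norm_num), norm_eq]
  constructor
  · intro h
    have him : z.im = 0 := by nlinarith [sq_nonneg z.re, sq_nonneg z.im]
    rcases mul_self_eq_one_iff.mp (by nlinarith : z.re * z.re = 1) with hre | hre
    · exact Or.inl (Zsqrtd.ext hre him)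
    · exact Or.inr (Zsqrtd.ext hre him)
  · rintro (rfl | rfl) <;> rfl

theorem card_units : Nat.card (ℤ√(-2))ˣ = 2 := by
  refine Nat.card_eq_two_iff.mpr ⟨1, -1, by decide, ?_⟩
  ext u
  simp only [Set.mem_insert_iff, Set.mem_singleton_iff, Set.mem_univ, iff_true, Units.ext_iff,
    Units.val_one, Units.val_neg]
  exact isUnit_iff.mp u.isUnit

theorem norm_unit (u : (ℤ√(-2))ˣ) : (u : ℤ√(-2)).norm = 1 :=
  (norm_eq_one_iff' (by norm_num) _).mpr u.isUnit

theorem norm_eq_of_associated {a b : ℤ√(-2)} (h : Associated a b) : a.norm = b.norm := by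
  obtain ⟨u, rfl⟩ := h
  rw [Zsqrtd.norm_mul, norm_unit, mul_one]

theorem associated_of_dvd_of_norm_eq {a b : ℤ√(-2)} (hb : b ≠ 0) (hab : a ∣ b)
    (h : a.norm = b.norm) : Associated a b := by
  obtain ⟨c, rfl⟩ := hab
  have ha : a ≠ 0 := left_ne_zero_of_mul hb
  rw [Zsqrtd.norm_mul, left_eq_mul₀ (norm_pos.mpr ha).ne', norm_eq_one_iff' (by norm_num)] at h
  exact associated_mul_unit_right a c h

noncomputable def normCount (n : ℤ) : ℕ := Nat.card {z : ℤ√(-2) // z.norm = n}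

theorem ncard_eq_normCount (n : ℤ) :
    {p : ℤ × ℤ | p.1 ^ 2 + 2 * p.2 ^ 2 = n}.ncard = normCount n := by
  rw [← Nat.card_coe_set_eq]
  refine Nat.card_congr (Equiv.subtypeEquiv
    ⟨fun p => ⟨p.1, p.2⟩, fun z => (z.re, z.im), fun _ => rfl, fun _ => rfl⟩ fun p => ?_)
  simp [norm_eq]

theorem normCount_one : normCount 1 = 2 := by
  rw [← card_units]
  exact Nat.card_congr
    { toFun z := ((norm_eq_one_iff' (by norm_num) _).mp z.2).unit
      invFun u := ⟨u, norm_unit u⟩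
      left_inv _ := rfl
      right_inv _ := Units.ext rfl }

theorem normCount_norm_mul {ρ : ℤ√(-2)} (hρ : ρ ≠ 0)
    (hdvd : ∀ z : ℤ√(-2), ρ.norm ∣ z.norm → ρ ∣ z) (m : ℤ) :
    normCount (ρ.norm * m) = normCount m := by
  refine (Nat.card_congr (Equiv.ofBijective
    (fun w => ⟨ρ * w, by rw [Zsqrtd.norm_mul, w.2]⟩) ⟨fun w w' h => ?_, ?_⟩)).symm
  · exact Subtype.ext (mul_left_cancel₀ hρ (congrArg Subtype.val h))
  · rintro ⟨z, hz⟩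
    obtain ⟨w, rfl⟩ := hdvd z (hz ▸ dvd_mul_right _ _)
    rw [Zsqrtd.norm_mul] at hz
    exact ⟨⟨w, mul_left_cancel₀ (norm_pos.mpr hρ).ne' hz⟩, rfl⟩

theorem sqrtd_dvd_of_two_dvd_norm {z : ℤ√(-2)} (h : 2 ∣ z.norm) : sqrtd ∣ z := by
  rw [norm_eq] at h
  obtain ⟨c, hc⟩ : 2 ∣ z.re :=
    Int.Prime.dvd_pow' Nat.prime_two ((Int.dvd_add_left (dvd_mul_right 2 _)).mp h)
  exact ⟨⟨z.im, -c⟩, by ext <;> simp [hc]⟩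

theorem normCount_two_pow (a : ℕ) : normCount (2 ^ a) = 2 := by
  induction a with
  | zero => exact normCount_one
  | succ a ih =>
    have := normCount_norm_mul (by decide) (fun z h => sqrtd_dvd_of_two_dvd_norm h) (2 ^ a)
    rwa [show (sqrtd : ℤ√(-2)).norm = 2 from rfl, ← pow_succ', ih] at this

section Inert

variable {p : ℕ} [Fact p.Prime]

theorem natCast_dvd_of_dvd_norm (h : ¬IsSquare (-2 : ZMod p)) {z : ℤ√(-2)}
    (hz : (p : ℤ) ∣ z.norm) : (p : ℤ√(-2)) ∣ z := by
  rw [← Int.cast_natCast, intCast_dvd, ← ZMod.intCast_zmod_eq_zero_iff_dvd,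
    ← ZMod.intCast_zmod_eq_zero_iff_dvd]
  rw [← ZMod.intCast_zmod_eq_zero_iff_dvd, norm_eq] at hz
  push_cast at hz
  have him : (z.im : ZMod p) = 0 := by
    by_contra him
    exact h ⟨z.re / z.im, by field_simp; linear_combination -hz⟩
  rw [him] at hz
  exact ⟨pow_eq_zero_iff two_ne_zero |>.mp (by linear_combination hz), him⟩

theorem normCount_prime_of_not_isSquare (h : ¬IsSquare (-2 : ZMod p)) : normCount p = 0 := by
  have hp : p.Prime := Fact.out
  refine @Nat.card_of_isEmpty _ ⟨fun ⟨z, hz⟩ => ?_⟩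
  have hdvd := norm_dvd_norm (natCast_dvd_of_dvd_norm h (by rw [hz]))
  rw [Zsqrtd.norm_natCast, hz] at hdvd
  have := Int.le_of_dvd (by exact_mod_cast hp.pos) hdvd
  nlinarith [hp.one_lt]

theorem normCount_pow_of_not_isSquare (h : ¬IsSquare (-2 : ZMod p)) (a : ℕ) :
    (normCount (p ^ a) : ℤ) = 2 * ∑ i ∈ Finset.range (a + 1), (-1) ^ i := by
  induction a using Nat.twoStepInduction with
  | zero => simp [normCount_one]
  | one => simp [normCount_prime_of_not_isSquare h, Finset.sum_range_succ]
  | more a ih _ =>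
    have := normCount_norm_mul (ρ := p) (by exact_mod_cast (Fact.out : p.Prime).ne_zero)
      (fun z hz => natCast_dvd_of_dvd_norm h (dvd_trans (by simp [Zsqrtd.norm_natCast]) hz))
      (p ^ a)
    rw [Zsqrtd.norm_natCast, ← sq, ← pow_add, add_comm] at this
    rw [this, ih, Finset.sum_range_succ _ (a + 2), Finset.sum_range_succ _ (a + 1)]
    ring

end Inert

section Split

variable {p : ℕ}

theorem exists_norm_eq_of_isSquare [Fact p.Prime] (h : IsSquare (-2 : ZMod p)) :
    ∃ π : ℤ√(-2), π.norm = p := by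
  have hp : p.Prime := Fact.out
  obtain ⟨s, hs⟩ := h
  have hdvd : (p : ℤ√(-2)) ∣ ⟨s.val, 1⟩ * ⟨s.val, -1⟩ := by
    rw [← Int.cast_natCast, intCast_dvd, ← ZMod.intCast_zmod_eq_zero_iff_dvd]
    refine ⟨?_, by simp⟩
    simp [← hs]
  have hndvd (e : ℤ) (he : e.natAbs = 1) : ¬(p : ℤ√(-2)) ∣ ⟨s.val, e⟩ := by
    rw [← Int.cast_natCast, intCast_dvd]
    rintro ⟨-, h⟩
    exact hp.not_dvd_one (he ▸ Int.natCast_dvd.mp h)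
  have hirr : ¬Irreducible (p : ℤ√(-2)) := fun hirr =>
    (hirr.prime.dvd_or_dvd hdvd).elim (hndvd 1 rfl) (hndvd (-1) rfl)
  have hunit : ¬IsUnit (p : ℤ√(-2)) := by
    rw [← norm_eq_one_iff, Zsqrtd.norm_natCast, ← Nat.cast_mul, Int.natAbs_natCast]
    nlinarith [hp.one_lt]
  obtain ⟨a, b, hab, ha, hb⟩ : ∃ a b, (p : ℤ√(-2)) = a * b ∧ ¬IsUnit a ∧ ¬IsUnit b := by
    simpa [irreducible_iff, hunit] using hirr
  rw [← norm_eq_one_iff] at ha hb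
  have hnorm : a.norm.natAbs * b.norm.natAbs = p ^ 2 := by
    rw [← Int.natAbs_mul, ← Zsqrtd.norm_mul, ← hab, Zsqrtd.norm_natCast, ← Nat.cast_mul,
      Int.natAbs_natCast, sq]
  refine ⟨a, ?_⟩
  rw [← Int.natAbs_of_nonneg (norm_nonneg a), ((hp.mul_eq_prime_sq_iff ha hb).mp hnorm).1]

theorem prime_of_norm_eq {π : ℤ√(-2)} (hp : p.Prime) (hπ : π.norm = p) : Prime π := by
  rw [← irreducible_iff_prime]
  refine ⟨fun hu => ?_, fun a b hab => ?_⟩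
  · rw [← norm_eq_one_iff, hπ] at hu
    exact hp.one_lt.ne' (by exact_mod_cast hu)
  · have hnorm : a.norm.natAbs * b.norm.natAbs = p := by
      rw [← Int.natAbs_mul, ← Zsqrtd.norm_mul, ← hab, hπ, Int.natAbs_natCast]
    rw [← norm_eq_one_iff, ← norm_eq_one_iff]
    rw [← hnorm, Nat.prime_mul_iff] at hp
    tauto

theorem not_dvd_star {π : ℤ√(-2)} (hp : p.Prime) (hp2 : p ≠ 2) (hπ : π.norm = p) :
    ¬π ∣ star π := by
  intro h
  obtain ⟨u, hu⟩ := associated_of_dvd_dvd h (by simpa using star_dvd_star h)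
  rcases isUnit_iff.mp u.isUnit with hu1 | hu1
  · have him : π.im = 0 := by
      have := congrArg Zsqrtd.im hu
      simp only [hu1, mul_one, im_star] at this
      omega
    rw [norm_eq, him] at hπ
    have : π.re.natAbs ^ 2 = p := by zify; simp [← hπ]
    exact Nat.Prime.not_prime_pow le_rfl (this ▸ hp)
  · have hre : π.re = 0 := by
      have := congrArg Zsqrtd.re hu
      simp only [hu1, mul_neg, mul_one, re_neg, re_star] at this
      omega
    rw [norm_eq, hre] at hπ
    have : 2 ∣ p := by zify; exact ⟨π.im ^ 2, by rw [← hπ]; ring⟩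
    exact hp2 ((Nat.prime_dvd_prime_iff_eq Nat.prime_two hp).mp this).symm

theorem norm_pow_mul_star_pow {π : ℤ√(-2)} (hπ : π.norm = p) (i j : ℕ) :
    (π ^ i * star π ^ j).norm = p ^ (i + j) := by
  rw [Zsqrtd.norm_mul, norm_pow, norm_pow, Zsqrtd.norm_conj, hπ, ← pow_add]

theorem exists_associated_pow_mul_star_pow {π z : ℤ√(-2)} (hp : p.Prime) (hπ : π.norm = p)
    {a : ℕ} (hz : z.norm = p ^ a) : ∃ i ≤ a, Associated (π ^ i * star π ^ (a - i)) z := by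
  have hπ' : π * star π = p := by rw [← norm_eq_mul_conj, hπ, Int.cast_natCast]
  have hz' : z * star z = p ^ a := by rw [← norm_eq_mul_conj, hz]; push_cast; rfl
  have hdvd : z ∣ π ^ a * star π ^ a := by
    rw [← mul_pow, hπ', ← hz']
    exact dvd_mul_right z _
  obtain ⟨d₁, d₂, h₁, h₂, rfl⟩ := exists_dvd_and_dvd_of_dvd_mul hdvd
  obtain ⟨i, hi, hd₁⟩ := (dvd_prime_pow (prime_of_norm_eq hp hπ) a).mp h₁
  obtain ⟨j, -, hd₂⟩ :=
    (dvd_prime_pow (prime_of_norm_eq hp ((Zsqrtd.norm_conj π).trans hπ)) a).mp h₂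
  have hassoc := (hd₁.mul_mul hd₂).symm
  have hij : i + j = a := by
    have := norm_eq_of_associated hassoc
    rw [norm_pow_mul_star_pow hπ, hz] at this
    exact Nat.pow_right_injective hp.two_le (by exact_mod_cast this)
  exact ⟨i, hi, by rwa [← hij, Nat.add_sub_cancel_left]⟩

theorem eq_of_unit_mul_pow_mul_star_pow {π : ℤ√(-2)} (hp : p.Prime) (hp2 : p ≠ 2)
    (hπ : π.norm = p) {a i j : ℕ} {u v : (ℤ√(-2))ˣ}
    (h : u * (π ^ i * star π ^ (a - i)) = v * (π ^ j * star π ^ (a - j))) : u = v ∧ i = j := by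
  have hprime := prime_of_norm_eq hp hπ
  have hprime' := prime_of_norm_eq hp ((Zsqrtd.norm_conj π).trans hπ)
  have hcop : IsCoprime π (star π) :=
    hprime.irreducible.coprime_iff_not_dvd.mpr (not_dvd_star hp hp2 hπ)
  have hle {i j : ℕ} {u v : (ℤ√(-2))ˣ}
      (h : u * (π ^ i * star π ^ (a - i)) = v * (π ^ j * star π ^ (a - j))) : j ≤ i := by
    have : π ^ j ∣ π ^ i * star π ^ (a - i) := by
      rw [← Units.dvd_mul_left (u := u), h]
      exact (dvd_mul_right _ _).mul_left _
    rw [← pow_dvd_pow_iff hprime.ne_zero hprime.not_isUnit]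
    exact (hcop.pow (m := j) (n := a - i)).dvd_of_dvd_mul_right this
  obtain rfl : i = j := le_antisymm (hle h.symm) (hle h)
  refine ⟨Units.ext (mul_right_cancel₀ ?_ h), rfl⟩
  exact mul_ne_zero (pow_ne_zero _ hprime.ne_zero) (pow_ne_zero _ hprime'.ne_zero)

theorem normCount_pow_of_norm_eq {π : ℤ√(-2)} (hp : p.Prime) (hp2 : p ≠ 2) (hπ : π.norm = p)
    (a : ℕ) : normCount (p ^ a) = 2 * (a + 1) := by
  have hmem (ui : (ℤ√(-2))ˣ × Fin (a + 1)) :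
      (ui.1 * (π ^ (ui.2 : ℕ) * star π ^ (a - ui.2)) : ℤ√(-2)).norm = p ^ a := by
    rw [Zsqrtd.norm_mul, norm_unit, one_mul, norm_pow_mul_star_pow hπ,
      Nat.add_sub_cancel' (Nat.lt_succ_iff.mp ui.2.2)]
  rw [← card_units, ← Nat.card_fin (a + 1), ← Nat.card_prod]
  refine (Nat.card_congr (Equiv.ofBijective (fun ui => ⟨_, hmem ui⟩) ⟨?_, ?_⟩)).symm
  · intro ⟨u, i⟩ ⟨v, j⟩ h
    obtain ⟨huv, hij⟩ := eq_of_unit_mul_pow_mul_star_pow hp hp2 hπ (congrArg Subtype.val h)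
    exact Prod.ext huv (Fin.ext hij)
  · rintro ⟨z, hz⟩
    obtain ⟨i, hi, u, hu⟩ := exists_associated_pow_mul_star_pow hp hπ hz
    exact ⟨(u, ⟨i, Nat.lt_succ_of_le hi⟩), Subtype.ext ((mul_comm _ _).trans hu)⟩

end Split

section Coprime

open EuclideanDomain

/-- With `gcd z m = z * a + m * b`, the norm of the gcd is `z.norm * a.norm` modulo `m`. -/
theorem dvd_norm_gcd {z : ℤ√(-2)} {m : ℤ} (h : m ∣ z.norm) : m ∣ (gcd z m).norm := by
  obtain ⟨c, hc⟩ := h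
  have hz : z * star z = m * c := by rw [← norm_eq_mul_conj, hc]; push_cast; ring
  set a := gcdA z m
  set b := gcdB z m
  rw [← intCast_dvd_intCast (d := -2), norm_eq_mul_conj, gcd_eq_gcd_ab z m]
  refine ⟨c * a * star a + z * a * star b + star z * b * star a + m * b * star b, ?_⟩
  simp only [star_add, star_mul, star_intCast]
  linear_combination (a * star a) * hz

theorem norm_gcd_eq {z : ℤ√(-2)} {m k : ℤ} (hm : 0 ≤ m) (hmk : IsCoprime m k)
    (hz : z.norm = m * k) : (gcd z m).norm = m := by
  have hdvd_mk : (gcd z m).norm ∣ m * k := hz ▸ norm_dvd_norm (gcd_dvd_left z m)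
  have hdvd_mm : (gcd z m).norm ∣ m * m :=
    Zsqrtd.norm_intCast m ▸ norm_dvd_norm (gcd_dvd_right z m)
  obtain ⟨a, b, hab⟩ := hmk
  have hdvd_m : (gcd z m).norm ∣ m := by
    have := dvd_add (dvd_mul_of_dvd_right hdvd_mm a) (dvd_mul_of_dvd_right hdvd_mk b)
    rwa [show a * (m * m) + b * (m * k) = m by linear_combination m * hab] at this
  exact Int.dvd_antisymm (norm_nonneg _) hm hdvd_m (dvd_norm_gcd (hz ▸ dvd_mul_right m k))

/-- The bijection is `(u, z) ↦ (u⁻¹ * g, u * (z / g))` with `g = gcd z m`. -/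
theorem two_mul_normCount_mul {m k : ℤ} (hm : 0 < m) (hmk : IsCoprime m k) :
    2 * normCount (m * k) = normCount m * normCount k := by
  have hg {z : ℤ√(-2)} (hz : z.norm = m * k) : (gcd z m).norm = m := norm_gcd_eq hm.le hmk hz
  have hg0 {z : ℤ√(-2)} (hz : z.norm = m * k) : gcd z m ≠ 0 := norm_pos.mp ((hg hz).symm ▸ hm)
  have hgz {z : ℤ√(-2)} (hz : z.norm = m * k) : gcd z m * (z / gcd z m) = z :=
    EuclideanDomain.mul_div_cancel' (hg0 hz) (gcd_dvd_left z m)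
  have hq {z : ℤ√(-2)} (hz : z.norm = m * k) : (z / gcd z m).norm = k := by
    have := congrArg Zsqrtd.norm (hgz hz)
    rw [Zsqrtd.norm_mul, hg hz, hz] at this
    exact mul_left_cancel₀ hm.ne' this
  have hprod (u : (ℤ√(-2))ˣ) {z : ℤ√(-2)} (hz : z.norm = m * k) :
      (↑u⁻¹ * gcd z m) * (u * (z / gcd z m)) = z := by
    rw [mul_mul_mul_comm, Units.inv_mul, one_mul, hgz hz]
  rw [← card_units, normCount, normCount, normCount, ← Nat.card_prod, ← Nat.card_prod]
  refine Nat.card_congr (Equiv.ofBijective (fun uz => (⟨↑uz.1⁻¹ * gcd uz.2.1 m, ?_⟩,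
    ⟨uz.1 * (uz.2.1 / gcd uz.2.1 m), ?_⟩)) ⟨?_, ?_⟩)
  · rw [Zsqrtd.norm_mul, norm_unit, one_mul, hg uz.2.2]
  · rw [Zsqrtd.norm_mul, norm_unit, one_mul, hq uz.2.2]
  · intro ⟨u, z, hz⟩ ⟨v, w, hw⟩ h
    simp only [Prod.mk.injEq, Subtype.mk.injEq] at h
    obtain rfl : z = w := by rw [← hprod u hz, ← hprod v hw, h.1, h.2]
    exact Prod.ext (inv_inj.mp (Units.ext (mul_right_cancel₀ (hg0 hz) h.1))) rfl
  · intro ⟨⟨w₁, hw₁⟩, ⟨w₂, hw₂⟩⟩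
    have hz : (w₁ * w₂).norm = m * k := by rw [Zsqrtd.norm_mul, hw₁, hw₂]
    have hw₁m : w₁ ∣ m := ⟨star w₁, by rw [← norm_eq_mul_conj, hw₁]⟩
    obtain ⟨u, hu⟩ := associated_of_dvd_of_norm_eq (hg0 hz)
      (dvd_gcd (dvd_mul_right w₁ w₂) hw₁m) (by rw [hw₁, hg hz])
    refine ⟨(u, ⟨w₁ * w₂, hz⟩), Prod.ext (Subtype.ext ?_) (Subtype.ext ?_)⟩
    · dsimp only
      rw [← hu, mul_comm, Units.mul_inv_cancel_right]
    · refine mul_left_cancel₀ (norm_pos.mp (hw₁ ▸ hm)) ?_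
      dsimp only
      rw [← mul_assoc, hu, hgz hz]

end Coprime

open ZMod in
theorem normCount_prime_pow {p : ℕ} (hp : p.Prime) (a : ℕ) :
    (normCount ((p : ℤ) ^ a) : ℤ) = 2 * ∑ i ∈ Finset.range (a + 1), χ₈' p ^ i := by
  have := Fact.mk hp
  rcases eq_or_ne p 2 with rfl | hp2
  · simp [normCount_two_pow, Finset.sum_range_succ']
  have hodd : p % 2 = 1 := Nat.odd_iff.mp (hp.odd_of_ne_two hp2)
  by_cases h : IsSquare (-2 : ZMod p)
  · obtain ⟨π, hπ⟩ := exists_norm_eq_of_isSquare h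
    have hχ : χ₈' p = 1 := by
      rw [χ₈'_nat_eq_if_mod_eight, if_neg (by omega),
        if_pos ((exists_sq_eq_neg_two_iff hp2).mp h)]
    simp [normCount_pow_of_norm_eq hp hp2 hπ, hχ]
  · have hχ : χ₈' p = -1 := by
      rw [χ₈'_nat_eq_if_mod_eight, if_neg (by omega),
        if_neg ((exists_sq_eq_neg_two_iff hp2).not.mp h)]
    rw [normCount_pow_of_not_isSquare h, hχ]

theorem normCount_eq_two_mul_sum_divisors {n : ℕ} (hn : 0 < n) :
    (normCount n : ℤ) = 2 * ∑ d ∈ n.divisors, chiNeg2 d := by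
  induction n using Nat.recOnPosPrimePosCoprime with
  | prime_pow p a hp _ =>
    rw [Nat.cast_pow, normCount_prime_pow hp, sum_divisors_prime_pow_chiNeg2 hp]
  | zero => omega
  | one => simp [normCount_one, chiNeg2]
  | coprime a b ha hb hab iha ihb =>
    have h : (2 * normCount (a * b) : ℤ) = normCount a * normCount b := by
      exact_mod_cast two_mul_normCount_mul (by omega) (Nat.isCoprime_iff_coprime.mpr hab)
    rw [iha (by omega), ihb (by omega)] at h
    rw [sum_divisors_mul_chiNeg2 hab, Nat.cast_mul]
    linarith

end ZsqrtdNegTwo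

/-- The number of integer pairs `(x, y)` with `x² + 2y² = n` equals
`2 · ∑_{d ∣ n} (-2/d)`. -/
theorem stmt_0 (n : ℕ) (hn : 0 < n) :
    ({p : ℤ × ℤ | p.1 ^ 2 + 2 * p.2 ^ 2 = (n : ℤ)}.ncard : ℤ) =
      2 * ∑ d ∈ n.divisors, chiNeg2 d := by
  rw [ZsqrtdNegTwo.ncard_eq_normCount, ZsqrtdNegTwo.normCount_eq_two_mul_sum_divisors hn]
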